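/- arXiv:2605.02957 — 10 statements merged into one kernel-verified Lean document; each statement's English description precedes it below -/
import Mathlib

section
/- If a language L over alphabet Σ admits a fooling set of cardinality m (a set of pairs (x_i, y_i) with x_i y_i ∈ L for all i, and for all i ≠ j, x_i y_j ∉ L or x_j y_i ∉ L), then every nondeterministic finite automaton recognizing L has at least m states. -/
/-!
Fix an accepting run of the NFA on each word `xᵢ yᵢ` and send `i` to the state it occupies
after reading `xᵢ`. If `i ≠ j` were sent to the same state, splicing the two runs there would
accept both `xᵢ yⱼ` and `xⱼ yᵢ`, which a fooling set forbids; so this map is injective.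
-/

namespace Language

variable {α ι : Type*}

def IsFoolingSet (L : Language α) (f : ι → List α × List α) : Prop :=
  (∀ i, (f i).1 ++ (f i).2 ∈ L) ∧
    ∀ i j, i ≠ j → (f i).1 ++ (f j).2 ∉ L ∨ (f j).1 ++ (f i).2 ∉ L

end Language

namespace NFA

variable {α σ ι : Type*} (M : NFA α σ)

theorem append_mem_accepts_iff {x y : List α} :
    x ++ y ∈ M.accepts ↔ ∃ q ∈ M.eval x, y ∈ M.acceptsFrom {q} := by
  rw [accepts_eq_acceptsFrom_start, append_mem_acceptsFrom, mem_acceptsFrom]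
  simp only [mem_evalFrom_iff_exists (S := M.evalFrom _ x), mem_acceptsFrom]
  exact ⟨fun ⟨s, hs, q, hq, hsq⟩ => ⟨q, hq, s, hs, hsq⟩, fun ⟨q, hq, s, hs, hsq⟩ => ⟨s, hs, q, hq, hsq⟩⟩

theorem exists_injective_of_isFoolingSet {f : ι → List α × List α}
    (hf : M.accepts.IsFoolingSet f) : ∃ g : ι → σ, Function.Injective g := by
  obtain ⟨hacc, hfool⟩ := hf
  choose g hg_eval hg_accepts using fun i => (M.append_mem_accepts_iff).1 (hacc i)
  have splice : ∀ i j, g i = g j → (f i).1 ++ (f j).2 ∈ M.accepts := fun i j hij =>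
    (M.append_mem_accepts_iff).2 ⟨g i, hg_eval i, hij ▸ hg_accepts j⟩
  refine ⟨g, fun i j hij => ?_⟩
  by_contra hne
  rcases hfool i j hne with h | h
  · exact h (splice i j hij)
  · exact h (splice j i hij.symm)

end NFA

/-- Fooling set lower bound: if a language `L` admits a fooling set of
cardinality `m`, then every NFA recognizing `L` has at least `m` states. -/
theorem fooling_set_lower_bound {α : Type} (L : Language α) (m : ℕ)
    (f : Fin m → List α × List α)
    (h₁ : ∀ i : Fin m, (f i).1 ++ (f i).2 ∈ L)
    (h₂ : ∀ i j : Fin m, i ≠ j →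
      (f i).1 ++ (f j).2 ∉ L ∨ (f j).1 ++ (f i).2 ∉ L)
    {σ : Type} [Fintype σ] (M : NFA α σ) (hM : M.accepts = L) :
    m ≤ Fintype.card σ := by
  subst hM
  obtain ⟨g, hg⟩ := M.exists_injective_of_isFoolingSet ⟨h₁, h₂⟩
  simpa using Fintype.card_le_of_injective g hg
end

section
/- For every language L recognized by an NFA A with n states, the language √L = { w | ww ∈ L } is recognized by an NFA with at most n³ states. -/
private lemma stepSet_iUnion {α σ ι : Type*} (M : NFA α σ) (S : ι → Set σ) (a : α) :
    M.stepSet (⋃ i, S i) a = ⋃ i, M.stepSet (S i) a := by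
  ext x; simp [NFA.stepSet]; tauto

private lemma evalFrom_iUnion {α σ ι : Type*} (M : NFA α σ) (S : ι → Set σ) (w : List α) :
    M.evalFrom (⋃ i, S i) w = ⋃ i, M.evalFrom (S i) w := by
  induction w generalizing S with
  | nil => simp
  | cons a w ih =>
      have h1 : ∀ T : Set σ, M.evalFrom T (a :: w) = M.evalFrom (M.stepSet T a) w := by
        intro T; rfl
      rw [h1, stepSet_iUnion, ih]
      simp [h1]

private lemma mem_evalFrom_iff {α σ : Type*} (M : NFA α σ) (S : Set σ) (w : List α) (f : σ) :
    f ∈ M.evalFrom S w ↔ ∃ p ∈ S, f ∈ M.evalFrom {p} w := by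
  have : S = ⋃ p : S, {(p : σ)} := by simp
  rw [this, evalFrom_iUnion]
  simp

private lemma evalFrom_append' {α σ : Type*} (M : NFA α σ) (S : Set σ) (x y : List α) :
    M.evalFrom S (x ++ y) = M.evalFrom (M.evalFrom S x) y := by
  simp [NFA.evalFrom, List.foldl_append]

/-- For every language recognized by an NFA with state set `σ` (of cardinality `n`),
the language `√L = { w | ww ∈ L }` is recognized by an NFA with state set
`σ × σ × σ`, i.e. with at most `n³` states. -/
theorem sqrt_upper_bound {α σ : Type} [Fintype σ] (M : NFA α σ) :
    ∃ N : NFA α (σ × σ × σ),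
      N.accepts = {w : List α | w ++ w ∈ M.accepts} := by
  classical
  refine ⟨⟨fun x a => {x.1} ×ˢ (M.step x.2.1 a ×ˢ M.step x.2.2 a),
      ⋃ p : σ, {p} ×ˢ (M.start ×ˢ {p}),
      {x | x.1 = x.2.1 ∧ x.2.2 ∈ M.accept}⟩, ?_⟩
  set N : NFA α (σ × σ × σ) :=
    ⟨fun x a => {x.1} ×ˢ (M.step x.2.1 a ×ˢ M.step x.2.2 a),
      ⋃ p : σ, {p} ×ˢ (M.start ×ˢ {p}),
      {x | x.1 = x.2.1 ∧ x.2.2 ∈ M.accept}⟩ with hN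
  have hprod : ∀ (w : List α) (p : σ) (S T : Set σ),
      N.evalFrom ({p} ×ˢ (S ×ˢ T)) w = {p} ×ˢ (M.evalFrom S w ×ˢ M.evalFrom T w) := by
    intro w
    induction w with
    | nil => intro p S T; simp
    | cons a w ih =>
        intro p S T
        have hstep : N.stepSet ({p} ×ˢ (S ×ˢ T)) a
            = {p} ×ˢ (M.stepSet S a ×ˢ M.stepSet T a) := by
          ext ⟨p', q', r'⟩
          simp only [NFA.stepSet, Set.mem_iUnion, Set.mem_prod, Set.mem_singleton_iff, hN]
          constructor
          · rintro ⟨⟨p₀, q₀, r₀⟩, ⟨hp₀, hq₀, hr₀⟩, rfl, hq', hr'⟩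
            exact ⟨hp₀.symm ▸ rfl, ⟨q₀, hq₀, hq'⟩, ⟨r₀, hr₀, hr'⟩⟩
          · rintro ⟨rfl, ⟨q₀, hq₀, hq'⟩, ⟨r₀, hr₀, hr'⟩⟩
            exact ⟨⟨p', q₀, r₀⟩, ⟨rfl, hq₀, hr₀⟩, rfl, hq', hr'⟩
        have h1 : ∀ (U : Set (σ × σ × σ)), N.evalFrom U (a :: w) = N.evalFrom (N.stepSet U a) w :=
          fun U => rfl
        have h2 : ∀ (U : Set σ), M.evalFrom U (a :: w) = M.evalFrom (M.stepSet U a) w :=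
          fun U => rfl
        rw [h1, hstep, ih, h2, h2]
  ext w
  simp only [Set.mem_setOf_eq, NFA.mem_accepts]
  have hstart : N.start = ⋃ p : σ, {p} ×ˢ (M.start ×ˢ {p}) := rfl
  constructor
  · rintro ⟨⟨p, q, f⟩, ⟨hpq, hf⟩, hev⟩
    rw [evalFrom_iUnion] at hev
    obtain ⟨p₀, hev⟩ := Set.mem_iUnion.mp hev
    rw [hprod] at hev
    obtain ⟨hp, hq, hr⟩ := hev
    simp only [Set.mem_singleton_iff] at hp
    dsimp at hpq
    subst hpq hp
    refine ⟨f, hf, ?_⟩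
    rw [evalFrom_append', mem_evalFrom_iff]
    exact ⟨p, hq, hr⟩
  · rintro ⟨f, hf, hev⟩
    rw [evalFrom_append', mem_evalFrom_iff] at hev
    obtain ⟨p, hp, hf'⟩ := hev
    refine ⟨(p, p, f), ⟨rfl, hf⟩, ?_⟩
    rw [evalFrom_iUnion]
    refine Set.mem_iUnion.mpr ⟨p, ?_⟩
    rw [hprod]
    exact ⟨rfl, hp, hf'⟩
end

section
/- Let B be the cube-construction NFA for √L built from an n-state NFA A recognizing L. Then L(B) = √L, i.e., B accepts a word w if and only if ww ∈ L(A). -/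
/-- The cube-construction NFA for `√L` built from an NFA `A`. -/
def cubeNFA {α σ : Type} (M : NFA α σ) : NFA α (σ × σ × σ) where
  step := fun x a => {y | y.1 = x.1 ∧ y.2.1 ∈ M.step x.2.1 a ∧ y.2.2 ∈ M.step x.2.2 a}
  start := {x | x.2.1 ∈ M.start ∧ x.2.2 = x.1}
  accept := {x | x.2.1 = x.1 ∧ x.2.2 ∈ M.accept}

/-!
A state `(p, q, r)` of the cube automaton runs two copies of `M` on the same word: the second
component from a start state, the third from the frozen guess `p`. Reading `w` therefore reaches
`(p, q, r)` with `q ∈ δ(Q₀, w)` and `r ∈ δ(p, w)`, and accepting exactly when `q = p` and `r` is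
final says that `M` can read `w` to `p` and then `w` again from `p` to a final state.
-/

namespace cubeNFA

variable {α σ : Type} (M : NFA α σ)

theorem stepSet_prod (p : σ) (S T : Set σ) (a : α) :
    (cubeNFA M).stepSet ({p} ×ˢ S ×ˢ T) a = {p} ×ˢ M.stepSet S a ×ˢ M.stepSet T a := by
  ext ⟨p', q', r'⟩
  simp only [cubeNFA, NFA.mem_stepSet, Set.mem_prod, Set.mem_singleton_iff, Set.mem_ofPred_eq,
    Prod.exists, ↓existsAndEq, true_and]
  constructor
  · rintro ⟨q, r, ⟨hq, hr⟩, rfl, hq', hr'⟩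
    exact ⟨rfl, ⟨q, hq, hq'⟩, r, hr, hr'⟩
  · rintro ⟨rfl, ⟨q, hq, hq'⟩, r, hr, hr'⟩
    exact ⟨q, r, ⟨hq, hr⟩, rfl, hq', hr'⟩

theorem evalFrom_prod (p : σ) (S T : Set σ) (w : List α) :
    (cubeNFA M).evalFrom ({p} ×ˢ S ×ˢ T) w = {p} ×ˢ M.evalFrom S w ×ˢ M.evalFrom T w := by
  induction w generalizing S T with
  | nil => rfl
  | cons a w ih => simp only [NFA.evalFrom_cons, stepSet_prod, ih]

theorem start_eq_iUnion : (cubeNFA M).start = ⋃ p, {p} ×ˢ M.start ×ˢ {p} := by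
  ext ⟨p, q, r⟩
  simp [cubeNFA]

theorem evalFrom_start (w : List α) :
    (cubeNFA M).evalFrom (cubeNFA M).start w =
      ⋃ p, {p} ×ˢ M.evalFrom M.start w ×ˢ M.evalFrom {p} w := by
  simp only [start_eq_iUnion, NFA.evalFrom_iUnion, evalFrom_prod]

end cubeNFA

/-- The cube construction recognizes exactly `√L`:
`B` accepts `w` iff `ww ∈ L(A)`. -/
theorem cubeNFA_accepts {α σ : Type} (M : NFA α σ) :
    (cubeNFA M).accepts = {w : List α | w ++ w ∈ M.accepts} := by
  ext w
  change _ ↔ w ++ w ∈ M.accepts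
  rw [NFA.mem_accepts, NFA.mem_accepts, cubeNFA.evalFrom_start, NFA.evalFrom_append]
  simp only [cubeNFA, Set.mem_ofPred_eq, Set.mem_iUnion, Set.mem_prod, Set.mem_singleton_iff,
    exists_eq_left', Prod.exists, ↓existsAndEq, true_and,
    NFA.mem_evalFrom_iff_exists (S := M.evalFrom M.start w)]
  exact ⟨fun ⟨p, f, hf, hp, hfp⟩ => ⟨f, hf, p, hp, hfp⟩,
    fun ⟨f, hf, p, hp, hfp⟩ => ⟨p, f, hf, hp, hfp⟩⟩
end

section
/- The nondeterministic state complexity of the square-root operation is exactly n³: for every n ≥ 6 there exists a language L recognized by an n-state NFA such that every NFA recognizing √L = { w | ww ∈ L } has at least n³ states. -/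
set_option maxHeartbeats 1600000

/-- The function `l` of the lower-bound construction: `l(0)=1`, `l(1)=2`, else `0`. -/
def lf (n : ℕ) (hn : 6 ≤ n) (p : Fin n) : Fin n :=
  if p.val = 0 then ⟨1, by omega⟩ else if p.val = 1 then ⟨2, by omega⟩ else ⟨0, by omega⟩

/-- The function `m` of the lower-bound construction: `m(3)=4`, `m(4)=5`, else `3`. -/
def mf (n : ℕ) (hn : 6 ≤ n) (p : Fin n) : Fin n :=
  if p.val = 3 then ⟨4, by omega⟩ else if p.val = 4 then ⟨5, by omega⟩ else ⟨3, by omega⟩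

/-- The lower-bound NFA `A_n`: states `{0,…,n−1}`, initial states `{0,1,2}`,
final states `{3,4,5}`, alphabet `{a_X, b_X : X ∈ Q³}` encoded as
`Bool × Fin n × Fin n × Fin n` (`false` for `a_X`, `true` for `b_X`).
For `X = (p,q,r)`: `a_X` maps `l(p) ↦ q` and `p ↦ r`;
`b_X` maps `q ↦ p` and `r ↦ m(p)`. -/
def lowerNFA (n : ℕ) (hn : 6 ≤ n) : NFA (Bool × Fin n × Fin n × Fin n) (Fin n) where
  step := fun s c =>
    match c with
    | (false, p, q, r) => (if s = lf n hn p then {q} else ∅) ∪ (if s = p then {r} else ∅)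
    | (true, p, q, r) => (if s = q then {p} else ∅) ∪ (if s = r then {mf n hn p} else ∅)
  start := {s | s.val < 3}
  accept := {s | 3 ≤ s.val ∧ s.val < 6}

lemma lf_spec (n : ℕ) (hn : 6 ≤ n) (p : Fin n) :
    (p.val = 0 → (lf n hn p).val = 1) ∧ (p.val = 1 → (lf n hn p).val = 2) ∧
      (p.val ≠ 0 → p.val ≠ 1 → (lf n hn p).val = 0) := by
  unfold lf; split_ifs <;> simp_all

lemma mf_spec (n : ℕ) (hn : 6 ≤ n) (p : Fin n) :
    (p.val = 3 → (mf n hn p).val = 4) ∧ (p.val = 4 → (mf n hn p).val = 5) ∧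
      (p.val ≠ 3 → p.val ≠ 4 → (mf n hn p).val = 3) := by
  unfold mf; split_ifs <;> simp_all

lemma lf_lt3 (n : ℕ) (hn : 6 ≤ n) (p : Fin n) : (lf n hn p).val < 3 := by
  unfold lf; split_ifs <;> simp

lemma mf_acc (n : ℕ) (hn : 6 ≤ n) (p : Fin n) : 3 ≤ (mf n hn p).val ∧ (mf n hn p).val < 6 := by
  unfold mf; split_ifs <;> simp

lemma mem_step (n : ℕ) (hn : 6 ≤ n) (s t : Fin n) (bb : Bool) (p q r : Fin n) :
    t ∈ (lowerNFA n hn).step s (bb, p, q, r) ↔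
      if bb then (s = q ∧ t = p) ∨ (s = r ∧ t = mf n hn p)
      else (s = lf n hn p ∧ t = q) ∨ (s = p ∧ t = r) := by
  cases bb <;> simp [lowerNFA, Set.mem_ite_empty_right]

lemma mem_start (n : ℕ) (hn : 6 ≤ n) (s : Fin n) :
    s ∈ (lowerNFA n hn).start ↔ s.val < 3 := Iff.rfl

lemma mem_accept (n : ℕ) (hn : 6 ≤ n) (s : Fin n) :
    s ∈ (lowerNFA n hn).accept ↔ 3 ≤ s.val ∧ s.val < 6 := Iff.rfl

/-- Diagonal words `a_X b_X a_X b_X` are accepted by the lower-bound NFA. -/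
lemma diag (n : ℕ) (hn : 6 ≤ n) (p q r : Fin n) :
    [((false:Bool),p,q,r),(true,p,q,r),(false,p,q,r),(true,p,q,r)] ∈ (lowerNFA n hn).accepts := by
  simp only [NFA.mem_accepts, NFA.evalFrom, List.foldl, NFA.mem_stepSet, mem_step,
    mem_start, mem_accept, Bool.false_eq_true, if_false, if_true]
  exact ⟨mf n hn p, mf_acc n hn p, r,
    ⟨p, ⟨q, ⟨lf n hn p, lf_lt3 n hn p, Or.inl ⟨rfl, rfl⟩⟩, Or.inl ⟨rfl, rfl⟩⟩,
      Or.inr ⟨rfl, rfl⟩⟩, Or.inr ⟨rfl, rfl⟩⟩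

/-- Fooling-set core: if both cross words are accepted then the triples agree. -/
lemma cross (n : ℕ) (hn : 6 ≤ n) (p q r p' q' r' : Fin n)
    (h1 : [((false:Bool),p,q,r),(true,p',q',r'),(false,p,q,r),(true,p',q',r')] ∈ (lowerNFA n hn).accepts)
    (h2 : [((false:Bool),p',q',r'),(true,p,q,r),(false,p',q',r'),(true,p,q,r)] ∈ (lowerNFA n hn).accepts) :
    p = p' ∧ q = q' ∧ r = r' := by
  have Lp := lf_spec n hn p
  have Lp' := lf_spec n hn p'
  have Mp := mf_spec n hn p
  have Mp' := mf_spec n hn p'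
  simp only [NFA.mem_accepts, NFA.evalFrom, List.foldl, NFA.mem_stepSet, mem_step,
    mem_start, mem_accept, Bool.false_eq_true, if_false] at h1 h2
  rcases h1 with ⟨s4, hacc, s3, ⟨s2, ⟨s1, ⟨s0, h0, (⟨a1,a2⟩|⟨a1,a2⟩)⟩, (⟨b1,b2⟩|⟨b1,b2⟩)⟩, (⟨c1,c2⟩|⟨c1,c2⟩)⟩, (⟨d1,d2⟩|⟨d1,d2⟩)⟩ <;>
  rcases h2 with ⟨t4, hacc', t3, ⟨t2, ⟨t1, ⟨t0, g0, (⟨e1,e2⟩|⟨e1,e2⟩)⟩, (⟨f1,f2⟩|⟨f1,f2⟩)⟩, (⟨g1,g2⟩|⟨g1,g2⟩)⟩, (⟨k1,k2⟩|⟨k1,k2⟩)⟩ <;>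
  subst_vars <;>
  simp only [Fin.ext_iff] at * <;>
  first
    | omega
    | trivial

/-- Tight lower bound: for every `n ≥ 6` there exists a language recognized by an
`n`-state NFA such that every NFA recognizing `√L` has at least `n³` states. -/
theorem sqrt_lower_bound_tight (n : ℕ) (hn : 6 ≤ n) :
    ∃ (α σ : Type) (_ : Fintype σ), Fintype.card σ = n ∧
      ∃ M : NFA α σ, ∀ (τ : Type) (_ : Fintype τ) (N : NFA α τ),
        N.accepts = {w : List α | w ++ w ∈ M.accepts} →
        n ^ 3 ≤ Fintype.card τ := by
  refine ⟨Bool × Fin n × Fin n × Fin n, Fin n, inferInstance, Fintype.card_fin n,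
    lowerNFA n hn, ?_⟩
  intro τ ft N hN
  have mem2 : ∀ X Y : Fin n × Fin n × Fin n,
      [((false:Bool), X), ((true:Bool), Y)] ∈ N.accepts ↔
        [((false:Bool), X), ((true:Bool), Y), ((false:Bool), X), ((true:Bool), Y)]
          ∈ (lowerNFA n hn).accepts := by
    intro X Y
    rw [hN]
    rfl
  have key : ∀ X : Fin n × Fin n × Fin n,
      ∃ s1, s1 ∈ N.stepSet N.start ((false:Bool), X) ∧
        ∃ s2 ∈ N.accept, s2 ∈ N.step s1 ((true:Bool), X) := by
    intro X
    have hx : [((false:Bool), X), ((true:Bool), X)] ∈ N.accepts := by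
      rw [mem2]
      obtain ⟨p, q, r⟩ := X
      exact diag n hn p q r
    rw [NFA.mem_accepts] at hx
    obtain ⟨s2, hs2, hev⟩ := hx
    have : s2 ∈ N.stepSet (N.stepSet N.start ((false:Bool), X)) ((true:Bool), X) := hev
    rw [NFA.mem_stepSet] at this
    obtain ⟨s1, hs1, hstep⟩ := this
    exact ⟨s1, hs1, s2, hs2, hstep⟩
  choose F hF1 hF2 using key
  have hinj : Function.Injective F := by
    intro X Y hxy
    have acc1 : [((false:Bool), X), ((true:Bool), Y)] ∈ N.accepts := by
      rw [NFA.mem_accepts]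
      obtain ⟨s2, hs2, hstep⟩ := hF2 Y
      refine ⟨s2, hs2, ?_⟩
      show s2 ∈ N.stepSet (N.stepSet N.start ((false:Bool), X)) ((true:Bool), Y)
      rw [NFA.mem_stepSet]
      exact ⟨F X, hF1 X, by rw [hxy]; exact hstep⟩
    have acc2 : [((false:Bool), Y), ((true:Bool), X)] ∈ N.accepts := by
      rw [NFA.mem_accepts]
      obtain ⟨s2, hs2, hstep⟩ := hF2 X
      refine ⟨s2, hs2, ?_⟩
      show s2 ∈ N.stepSet (N.stepSet N.start ((false:Bool), Y)) ((true:Bool), X)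
      rw [NFA.mem_stepSet]
      exact ⟨F Y, hF1 Y, by rw [← hxy]; exact hstep⟩
    rw [mem2] at acc1 acc2
    obtain ⟨p, q, r⟩ := X
    obtain ⟨p', q', r'⟩ := Y
    obtain ⟨h1, h2, h3⟩ := cross n hn p q r p' q' r' acc1 acc2
    simp [h1, h2, h3]
  have := Fintype.card_le_of_injective F hinj
  simpa [Fintype.card_prod, pow_succ, mul_assoc] using this
end

section
/- For the NFA A_n of the lower-bound construction, for every triple X = (p, q, r) ∈ Q³, the word a_X b_X a_X b_X is accepted by A_n; hence a_X b_X ∈ √L(A_n). -/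
namespace lowerNFA

variable {n : ℕ} {hn : 6 ≤ n} (p q r : Fin n)

theorem lf_mem_start : lf n hn p ∈ (lowerNFA n hn).start := by
  unfold lf
  split_ifs <;> simp [lowerNFA]

theorem mf_mem_accept : mf n hn p ∈ (lowerNFA n hn).accept := by
  unfold mf
  split_ifs <;> simp [lowerNFA]

theorem q_mem_step_lf_a : q ∈ (lowerNFA n hn).step (lf n hn p) (false, p, q, r) := by
  simp [lowerNFA]

theorem r_mem_step_p_a : r ∈ (lowerNFA n hn).step p (false, p, q, r) := by
  simp [lowerNFA]

theorem p_mem_step_q_b : p ∈ (lowerNFA n hn).step q (true, p, q, r) := by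
  simp [lowerNFA]

theorem mf_mem_step_r_b : mf n hn p ∈ (lowerNFA n hn).step r (true, p, q, r) := by
  simp [lowerNFA]

end lowerNFA

/-- For every triple `X`, the word `a_X b_X a_X b_X` is accepted by `A_n`;
hence `a_X b_X ∈ √L(A_n)`. -/
theorem lowerNFA_diagonal_accepted (n : ℕ) (hn : 6 ≤ n)
    (X : Fin n × Fin n × Fin n) :
    [(false, X), (true, X), (false, X), (true, X)] ∈ (lowerNFA n hn).accepts := by
  obtain ⟨p, q, r⟩ := X
  -- The first `a_X b_X` runs through `l(p) → q → p`, the second through `p → r → m(p)`.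
  refine NFA.accepts_iff_exists_path.2
    ⟨lf n hn p, lowerNFA.lf_mem_start p, mf n hn p, lowerNFA.mf_mem_accept p, ⟨?_⟩⟩
  exact .cons q _ _ _ _ (lowerNFA.q_mem_step_lf_a p q r) <|
    .cons p _ _ _ _ (lowerNFA.p_mem_step_q_b p q r) <|
    .cons r _ _ _ _ (lowerNFA.r_mem_step_p_a p q r) <|
    .cons (mf n hn p) _ _ _ _ (lowerNFA.mf_mem_step_r_b p q r) (.nil _)
end

section
/- In the lower-bound construction, if X₃ ≠ X₄ with p₃ = p₄ ∈ Q₀ and both a_{X₃} b_{X₄} a_{X₃} b_{X₄} and a_{X₄} b_{X₃} a_{X₄} b_{X₃} are accepted by A_n, then r₃ = r₄ = q₃ = q₄, contradicting X₃ ≠ X₄ (since p₃ = p₄). Hence no such pair exists. -/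
/-- Auxiliary: joint-run analysis for one cross word. -/
lemma lowerNFA_key (n : ℕ) (hn : 6 ≤ n) (p q₃ r₃ q₄ r₄ : Fin n) (hp0 : p.val < 3)
    (h : [((false : Bool), (p, q₃, r₃)), (true, (p, q₄, r₄)),
          (false, (p, q₃, r₃)), (true, (p, q₄, r₄))] ∈ (lowerNFA n hn).accepts) :
    r₃ = r₄ ∧ (q₃ = q₄ ∨ q₄ = r₃) := by
  have hlf : (lf n hn p).val < 3 ∧ (lf n hn p).val ≠ p.val := by
    unfold lf; split_ifs <;> simp <;> omega
  have hmf : (mf n hn p).val = 3 := by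
    unfold mf; split_ifs <;> simp <;> omega
  obtain ⟨s4, hacc, hev⟩ := h
  simp only [NFA.eval, NFA.evalFrom, List.foldl] at hev
  rw [NFA.mem_stepSet] at hev
  obtain ⟨s3, hev, st4⟩ := hev
  rw [NFA.mem_stepSet] at hev
  obtain ⟨s2, hev, st3⟩ := hev
  rw [NFA.mem_stepSet] at hev
  obtain ⟨s1, hev, st2⟩ := hev
  rw [NFA.mem_stepSet] at hev
  obtain ⟨s0, hs0, st1⟩ := hev
  simp only [lowerNFA, Set.mem_union, Set.mem_ite_empty_right, Set.mem_singleton_iff,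
    Set.mem_setOf_eq] at hs0 hacc st1 st2 st3 st4
  simp only [Fin.ext_iff] at st1 st2 st3 st4 ⊢
  omega

/-- If `X₃ ≠ X₄` with `p₃ = p₄ ∈ Q₀` then the two cross words cannot both be
accepted by `A_n` (their joint acceptance forces `X₃ = X₄`). -/
theorem lowerNFA_no_cross_initial (n : ℕ) (hn : 6 ≤ n)
    (p₃ q₃ r₃ p₄ q₄ r₄ : Fin n)
    (hne : (p₃, q₃, r₃) ≠ (p₄, q₄, r₄)) (hp : p₃ = p₄) (hp0 : p₃.val < 3)
    (h34 : [((false : Bool), (p₃, q₃, r₃)), (true, (p₄, q₄, r₄)),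
            (false, (p₃, q₃, r₃)), (true, (p₄, q₄, r₄))] ∈ (lowerNFA n hn).accepts)
    (h43 : [((false : Bool), (p₄, q₄, r₄)), (true, (p₃, q₃, r₃)),
            (false, (p₄, q₄, r₄)), (true, (p₃, q₃, r₃))] ∈ (lowerNFA n hn).accepts) :
    False := by
  subst hp
  obtain ⟨hr, hq⟩ := lowerNFA_key n hn p₃ q₃ r₃ q₄ r₄ hp0 h34
  obtain ⟨hr', hq'⟩ := lowerNFA_key n hn p₃ q₄ r₄ q₃ r₃ hp0 h43
  apply hne
  have hq34 : q₃ = q₄ := by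
    simp only [Fin.ext_iff] at hr hr' hq hq' ⊢
    omega
  rw [hq34, hr]
end

section
/- In the lower-bound construction, if p₃ ≠ p₄ and a_{X₃} b_{X₄} ∈ √L(A_n) via case (2) or (5) (so p₄ = l(p₃) ∈ Q₀), then a_{X₄} b_{X₃} ∈ √L(A_n) forces case (2) or (5) as well (so p₃ = l(p₄)); but p₃ = l(p₄) and p₄ = l(p₃) with p₃ ≠ p₄ is impossible. -/
/-- If `p₃ ≠ p₄` and `a_{X₃} b_{X₄} ∈ √L(A_n)` via case (2) or (5)
(so `p₄ = l(p₃)`), then `a_{X₄} b_{X₃} ∈ √L(A_n)` is impossible. -/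
theorem lowerNFA_no_cross_l_case (n : ℕ) (hn : 6 ≤ n)
    (p₃ q₃ r₃ p₄ q₄ r₄ : Fin n)
    (hne : p₃ ≠ p₄) (hl : p₄ = lf n hn p₃)
    (h34 : [((false : Bool), (p₃, q₃, r₃)), (true, (p₄, q₄, r₄))] ∈
      {w : List (Bool × Fin n × Fin n × Fin n) | w ++ w ∈ (lowerNFA n hn).accepts})
    (h43 : [((false : Bool), (p₄, q₄, r₄)), (true, (p₃, q₃, r₃))] ∈
      {w : List (Bool × Fin n × Fin n × Fin n) | w ++ w ∈ (lowerNFA n hn).accepts}) :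
    False := by
  simp only [Set.mem_setOf_eq, List.cons_append, List.nil_append, NFA.mem_accepts,
    NFA.eval, NFA.evalFrom, List.foldl_cons, List.foldl_nil, NFA.mem_stepSet,
    lowerNFA, Set.mem_union, Set.mem_ite_empty_right, Set.mem_singleton_iff] at h34 h43
  obtain ⟨s4, hs4, s3, ⟨s2, ⟨s1, ⟨s0, hs0, d1⟩, d2⟩, d3⟩, d4⟩ := h34
  obtain ⟨t4, ht4, t3, ⟨t2, ⟨t1, ⟨t0, ht0, e1⟩, e2⟩, e3⟩, e4⟩ := h43
  rw [Fin.ne_iff_vne] at hne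
  simp only [Fin.ext_iff, lf, mf, apply_ite Fin.val] at *
  split_ifs at * <;> omega
end

section
/- In the lower-bound construction, if p₃ ≠ p₄ and a_{X₃} b_{X₄} ∈ √L(A_n) via case (6) or (7) (so p₃ = m(p₄) ∈ F), then a_{X₄} b_{X₃} ∈ √L(A_n) forces case (6) or (7) as well (so p₄ = m(p₃)); but p₃ = m(p₄) and p₄ = m(p₃) with p₃ ≠ p₄ is impossible. -/
lemma step_false (n : ℕ) (hn : 6 ≤ n) (s t p q r : Fin n) :
    t ∈ (lowerNFA n hn).step s (false, p, q, r) ↔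
      (s = lf n hn p ∧ t = q) ∨ (s = p ∧ t = r) := by
  simp only [lowerNFA, Set.mem_union]
  split <;> split <;>
    simp only [Set.mem_singleton_iff, Set.mem_empty_iff_false, or_false, false_or] <;> tauto

lemma step_true (n : ℕ) (hn : 6 ≤ n) (s t p q r : Fin n) :
    t ∈ (lowerNFA n hn).step s (true, p, q, r) ↔
      (s = q ∧ t = p) ∨ (s = r ∧ t = mf n hn p) := by
  simp only [lowerNFA, Set.mem_union]
  split <;> split <;>
    simp only [Set.mem_singleton_iff, Set.mem_empty_iff_false, or_false, false_or] <;> tauto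

lemma unpack (n : ℕ) (hn : 6 ≤ n) (p₁ q₁ r₁ p₂ q₂ r₂ : Fin n)
    (h : [((false : Bool), (p₁, q₁, r₁)), (true, (p₂, q₂, r₂))] ∈
      {w : List (Bool × Fin n × Fin n × Fin n) | w ++ w ∈ (lowerNFA n hn).accepts}) :
    ∃ s0 s1 s2 s3 s4 : Fin n, s0.val < 3 ∧ 3 ≤ s4.val ∧ s4.val < 6 ∧
      ((s0 = lf n hn p₁ ∧ s1 = q₁) ∨ (s0 = p₁ ∧ s1 = r₁)) ∧
      ((s1 = q₂ ∧ s2 = p₂) ∨ (s1 = r₂ ∧ s2 = mf n hn p₂)) ∧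
      ((s2 = lf n hn p₁ ∧ s3 = q₁) ∨ (s2 = p₁ ∧ s3 = r₁)) ∧
      ((s3 = q₂ ∧ s4 = p₂) ∨ (s3 = r₂ ∧ s4 = mf n hn p₂)) := by
  simp only [Set.mem_setOf_eq, NFA.mem_accepts, NFA.evalFrom, List.cons_append,
    List.nil_append, List.foldl_cons, List.foldl_nil, NFA.mem_stepSet] at h
  obtain ⟨s4, h4, s3, ⟨s2, ⟨s1, ⟨s0, h0, h1⟩, h2⟩, h3⟩, hstep4⟩ := h
  rw [step_false] at h1 h3
  rw [step_true] at h2 hstep4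
  exact ⟨s0, s1, s2, s3, s4, h0, h4.1, h4.2, h1, h2, h3, hstep4⟩

lemma lf_val (n : ℕ) (hn : 6 ≤ n) (p : Fin n) :
    (lf n hn p).val = if p.val = 0 then 1 else if p.val = 1 then 2 else 0 := by
  unfold lf; split_ifs <;> rfl

lemma mf_val (n : ℕ) (hn : 6 ≤ n) (p : Fin n) :
    (mf n hn p).val = if p.val = 3 then 4 else if p.val = 4 then 5 else 3 := by
  unfold mf; split_ifs <;> rfl

/-- If `p₃ ≠ p₄` and `a_{X₃} b_{X₄} ∈ √L(A_n)` via case (6) or (7)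
(so `p₃ = m(p₄)`), then `a_{X₄} b_{X₃} ∈ √L(A_n)` is impossible. -/
theorem lowerNFA_no_cross_m_case (n : ℕ) (hn : 6 ≤ n)
    (p₃ q₃ r₃ p₄ q₄ r₄ : Fin n)
    (hne : p₃ ≠ p₄) (hm : p₃ = mf n hn p₄)
    (h34 : [((false : Bool), (p₃, q₃, r₃)), (true, (p₄, q₄, r₄))] ∈
      {w : List (Bool × Fin n × Fin n × Fin n) | w ++ w ∈ (lowerNFA n hn).accepts})
    (h43 : [((false : Bool), (p₄, q₄, r₄)), (true, (p₃, q₃, r₃))] ∈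
      {w : List (Bool × Fin n × Fin n × Fin n) | w ++ w ∈ (lowerNFA n hn).accepts}) :
    False := by
  obtain ⟨a0, a1, a2, a3, a4, ha0, ha4l, ha4u, hA, hB, hC, hD⟩ := unpack n hn _ _ _ _ _ _ h34
  obtain ⟨b0, b1, b2, b3, b4, hb0, hb4l, hb4u, hE, hF, hG, hH⟩ := unpack n hn _ _ _ _ _ _ h43
  rw [Ne, Fin.ext_iff] at hne
  rw [Fin.ext_iff] at hm
  simp only [Fin.ext_iff] at hA hB hC hD hE hF hG hH
  rw [mf_val] at hm
  simp only [lf_val, mf_val] at hA hB hC hD hE hF hG hH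
  split_ifs at hm hA hB hC hD hE hF hG hH <;> omega
end

section
/- For any regular language L, the language √L = { w | ww ∈ L } is regular. -/
/-!
A DFA for `{w | w w ∈ L}` cannot run on `w` twice, so instead it runs all copies of the automaton
of `L` in parallel, one from each state: its state after reading `w` is the transformation
`q ↦ δ(q, w)`. Then `w w` is accepted iff that transformation `f` satisfies `f (f start) ∈ accept`,
and since the state space `σ → σ` is finite when `σ` is, the language is regular.
-/

namespace DFA

variable {α σ : Type*}

def sqrt (M : DFA α σ) : DFA α (σ → σ) where
  step f a q := M.step (f q) a
  start := id
  accept := {f | f (f M.start) ∈ M.accept}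

variable (M : DFA α σ)

theorem sqrt_evalFrom (f : σ → σ) (w : List α) :
    M.sqrt.evalFrom f w = fun q => M.evalFrom (f q) w := by
  induction w generalizing f with
  | nil => rfl
  | cons a w ih => exact ih _

theorem sqrt_eval (w : List α) : M.sqrt.eval w = fun q => M.evalFrom q w :=
  M.sqrt_evalFrom id w

theorem mem_sqrt_accepts (w : List α) : w ∈ M.sqrt.accepts ↔ w ++ w ∈ M.accepts := by
  rw [mem_accepts, mem_accepts, sqrt_eval, eval, evalFrom_of_append]
  rfl

end DFA

/-- The square root of a regular language is regular. -/
theorem sqrt_isRegular {α : Type} (L : Language α) (hL : L.IsRegular) :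
    Language.IsRegular {w : List α | w ++ w ∈ L} := by
  obtain ⟨σ, _, M, rfl⟩ := hL
  classical
  exact ⟨σ → σ, inferInstance, M.sqrt, Set.ext M.mem_sqrt_accepts⟩
end

section
/- For every n ≥ 6, the gap between the previously known lower bound and the exact bound is closed: there exists an n-state NFA language L with nondeterministic state complexity of √L equal to exactly n³ (the upper bound n³ is attained). -/
namespace SqrtAux

open Set

variable {α σ : Type}

theorem evalFrom_append (M : NFA α σ) (S : Set σ) (u v : List α) :
    M.evalFrom S (u ++ v) = M.evalFrom (M.evalFrom S u) v := by
  simp [NFA.evalFrom, List.foldl_append]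

theorem mem_evalFrom_iff (M : NFA α σ) (S : Set σ) (w : List α) (x : σ) :
    x ∈ M.evalFrom S w ↔ ∃ s ∈ S, x ∈ M.evalFrom {s} w := by
  induction w generalizing S with
  | nil => simp
  | cons a w ih =>
    have h1 : M.evalFrom S (a :: w) = M.evalFrom (M.stepSet S a) w := rfl
    have h2 : ∀ s : σ, M.evalFrom {s} (a :: w) = M.evalFrom (M.step s a) w := by
      intro s
      have : M.stepSet {s} a = M.step s a := by simp [NFA.stepSet]
      show M.evalFrom (M.stepSet {s} a) w = _
      rw [this]
    rw [h1, ih]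
    simp only [h2]
    constructor
    · rintro ⟨t, ht, hx⟩
      rw [NFA.mem_stepSet] at ht
      obtain ⟨s, hs, hts⟩ := ht
      exact ⟨s, hs, (ih _).2 ⟨t, hts, hx⟩⟩
    · rintro ⟨s, hs, hx⟩
      rw [ih] at hx
      obtain ⟨t, hts, hx⟩ := hx
      exact ⟨t, (NFA.mem_stepSet ..).2 ⟨s, hs, hts⟩, hx⟩

theorem fooling {τ ι : Type} [Fintype τ] [Fintype ι] (N : NFA α τ)
    (u v : ι → List α)
    (h1 : ∀ i, u i ++ v i ∈ N.accepts)
    (h2 : ∀ i j, u i ++ v j ∈ N.accepts → u j ++ v i ∈ N.accepts → i = j) :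
    Fintype.card ι ≤ Fintype.card τ := by
  have key : ∀ i : ι, ∃ s : τ, s ∈ N.evalFrom N.start (u i) ∧
      ∃ f ∈ N.accept, f ∈ N.evalFrom {s} (v i) := by
    intro i
    obtain ⟨f, hf, hmem⟩ := (N.mem_accepts).1 (h1 i)
    rw [evalFrom_append, mem_evalFrom_iff] at hmem
    obtain ⟨s, hs, hfs⟩ := hmem
    exact ⟨s, hs, f, hf, hfs⟩
  choose g hg1 hg2 using key
  have hinj : Function.Injective g := by
    intro i j hij
    apply h2 i j
    · obtain ⟨f, hf, hfs⟩ := hg2 j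
      refine (N.mem_accepts).2 ⟨f, hf, ?_⟩
      rw [evalFrom_append, mem_evalFrom_iff]
      exact ⟨g i, hg1 i, by rw [hij]; exact hfs⟩
    · obtain ⟨f, hf, hfs⟩ := hg2 i
      refine (N.mem_accepts).2 ⟨f, hf, ?_⟩
      rw [evalFrom_append, mem_evalFrom_iff]
      exact ⟨g j, hg1 j, by rw [← hij]; exact hfs⟩
  exact Fintype.card_le_of_injective g hinj

/-- The cube construction. -/
def sqrtNFA (M : NFA α σ) : NFA α (σ × σ × σ) where
  step := fun s c => {t | t.1 ∈ M.step s.1 c ∧ t.2.1 ∈ M.step s.2.1 c ∧ t.2.2 = s.2.2}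
  start := {s | s.1 ∈ M.start ∧ s.2.1 ∈ (fun m => ({m} : Set σ)) s.2.2}
  accept := {s | s.1 = s.2.2 ∧ s.2.1 ∈ M.accept}

theorem sqrt_evalFrom (M : NFA α σ) (w : List α) (S : Set σ) (T : σ → Set σ)
    (x y m : σ) :
    (x, y, m) ∈ (sqrtNFA M).evalFrom {s | s.1 ∈ S ∧ s.2.1 ∈ T s.2.2} w ↔
      x ∈ M.evalFrom S w ∧ y ∈ M.evalFrom (T m) w := by
  induction w generalizing S T with
  | nil => simp
  | cons a w ih =>
    have hstep : (sqrtNFA M).stepSet {s | s.1 ∈ S ∧ s.2.1 ∈ T s.2.2} a =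
        {s | s.1 ∈ M.stepSet S a ∧ s.2.1 ∈ (fun m => M.stepSet (T m) a) s.2.2} := by
      ext t
      simp only [NFA.mem_stepSet, mem_setOf_eq, sqrtNFA]
      constructor
      · rintro ⟨s, ⟨hs1, hs2⟩, ht1, ht2, ht3⟩
        exact ⟨⟨s.1, hs1, ht1⟩, ⟨s.2.1, ht3 ▸ hs2, ht2⟩⟩
      · rintro ⟨⟨s1, hs1, ht1⟩, ⟨s2, hs2, ht2⟩⟩
        exact ⟨(s1, s2, t.2.2), ⟨hs1, hs2⟩, ht1, ht2, rfl⟩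
    have e1 : (sqrtNFA M).evalFrom {s | s.1 ∈ S ∧ s.2.1 ∈ T s.2.2} (a :: w)
        = (sqrtNFA M).evalFrom ((sqrtNFA M).stepSet {s | s.1 ∈ S ∧ s.2.1 ∈ T s.2.2} a) w := rfl
    have e2 : M.evalFrom S (a :: w) = M.evalFrom (M.stepSet S a) w := rfl
    have e3 : M.evalFrom (T m) (a :: w) = M.evalFrom (M.stepSet (T m) a) w := rfl
    rw [e1, e2, e3, hstep, ih (M.stepSet S a) (fun m => M.stepSet (T m) a)]

theorem sqrt_accepts (M : NFA α σ) :
    (sqrtNFA M).accepts = {w | w ++ w ∈ M.accepts} := by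
  ext w
  rw [NFA.mem_accepts]
  constructor
  · rintro ⟨⟨x, y, m⟩, ⟨hx, hy⟩, hmem⟩
    rw [show (sqrtNFA M).start = {s : σ × σ × σ | s.1 ∈ M.start ∧ s.2.1 ∈ (fun m => ({m} : Set σ)) s.2.2} from rfl,
      sqrt_evalFrom] at hmem
    refine (M.mem_accepts).2 ⟨y, hy, ?_⟩
    rw [evalFrom_append, mem_evalFrom_iff]
    have hx' : x = m := hx
    exact ⟨m, hx' ▸ hmem.1, hmem.2⟩
  · intro hw
    obtain ⟨f, hf, hmem⟩ := (M.mem_accepts).1 hw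
    rw [evalFrom_append, mem_evalFrom_iff] at hmem
    obtain ⟨m, hm, hfm⟩ := hmem
    refine ⟨(m, f, m), ⟨rfl, hf⟩, ?_⟩
    rw [show (sqrtNFA M).start = {s : σ × σ × σ | s.1 ∈ M.start ∧ s.2.1 ∈ (fun m => ({m} : Set σ)) s.2.2} from rfl,
      sqrt_evalFrom]
    exact ⟨hm, hfm⟩

end SqrtAux

namespace SqrtAux

variable {n : ℕ} {hn : 6 ≤ n}

theorem mem_stepA (s s' p q r : Fin n) :
    s' ∈ (lowerNFA n hn).step s (false, p, q, r) ↔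
      (s = lf n hn p ∧ s' = q) ∨ (s = p ∧ s' = r) := by
  show s' ∈ (if s = lf n hn p then {q} else ∅) ∪ (if s = p then ({r} : Set (Fin n)) else ∅) ↔ _
  by_cases h1 : s = lf n hn p <;> by_cases h2 : s = p <;> simp [h1, h2] <;> tauto

theorem mem_stepB (s s' p q r : Fin n) :
    s' ∈ (lowerNFA n hn).step s (true, p, q, r) ↔
      (s = q ∧ s' = p) ∨ (s = r ∧ s' = mf n hn p) := by
  show s' ∈ (if s = q then {p} else ∅) ∪ (if s = r then ({mf n hn p} : Set (Fin n)) else ∅) ↔ _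
  by_cases h1 : s = q <;> by_cases h2 : s = r <;> simp [h1, h2] <;> tauto

theorem accepts4 (c1 c2 c3 c4 : Bool × Fin n × Fin n × Fin n) :
    [c1, c2, c3, c4] ∈ (lowerNFA n hn).accepts ↔
      ∃ s0 s1 s2 s3 s4 : Fin n, s0.val < 3 ∧
        s1 ∈ (lowerNFA n hn).step s0 c1 ∧ s2 ∈ (lowerNFA n hn).step s1 c2 ∧
        s3 ∈ (lowerNFA n hn).step s2 c3 ∧ s4 ∈ (lowerNFA n hn).step s3 c4 ∧
        3 ≤ s4.val ∧ s4.val < 6 := by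
  rw [NFA.mem_accepts]
  have e : (lowerNFA n hn).evalFrom (lowerNFA n hn).start [c1, c2, c3, c4] =
      (lowerNFA n hn).stepSet ((lowerNFA n hn).stepSet ((lowerNFA n hn).stepSet
        ((lowerNFA n hn).stepSet (lowerNFA n hn).start c1) c2) c3) c4 := rfl
  rw [e]
  simp only [NFA.mem_stepSet]
  constructor
  · rintro ⟨s4, ⟨h4a, h4b⟩, s3, ⟨s2, ⟨s1, ⟨s0, h0, h1⟩, h2⟩, h3⟩, h4⟩
    exact ⟨s0, s1, s2, s3, s4, h0, h1, h2, h3, h4, h4a, h4b⟩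
  · rintro ⟨s0, s1, s2, s3, s4, h0, h1, h2, h3, h4, h5, h6⟩
    exact ⟨s4, ⟨h5, h6⟩, s3, ⟨s2, ⟨s1, ⟨s0, h0, h1⟩, h2⟩, h3⟩, h4⟩

theorem lf_spec (x : Fin n) :
    (x.val = 0 ∧ (lf n hn x).val = 1) ∨ (x.val = 1 ∧ (lf n hn x).val = 2) ∨
    (x.val ≠ 0 ∧ x.val ≠ 1 ∧ (lf n hn x).val = 0) := by
  unfold lf; split_ifs <;> simp_all

theorem mf_spec (x : Fin n) :
    (x.val = 3 ∧ (mf n hn x).val = 4) ∨ (x.val = 4 ∧ (mf n hn x).val = 5) ∨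
    (x.val ≠ 3 ∧ x.val ≠ 4 ∧ (mf n hn x).val = 3) := by
  unfold mf; split_ifs <;> simp_all

theorem diag_mem (p q r : Fin n) :
    [(false, p, q, r), (true, p, q, r), (false, p, q, r), (true, p, q, r)]
      ∈ (lowerNFA n hn).accepts := by
  rw [accepts4]
  refine ⟨lf n hn p, q, p, r, mf n hn p, ?_, ?_, ?_, ?_, ?_, ?_, ?_⟩
  · have := lf_spec (hn := hn) p; omega
  · rw [mem_stepA]; exact Or.inl ⟨rfl, rfl⟩
  · rw [mem_stepB]; exact Or.inl ⟨rfl, rfl⟩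
  · rw [mem_stepA]; exact Or.inr ⟨rfl, rfl⟩
  · rw [mem_stepB]; exact Or.inr ⟨rfl, rfl⟩
  · have := mf_spec (hn := hn) p; omega
  · have := mf_spec (hn := hn) p; omega

set_option maxHeartbeats 1600000 in
theorem run_spec (p q r p' q' r' : Fin n)
    (h : [(false, p, q, r), (true, p', q', r'), (false, p, q, r), (true, p', q', r')]
      ∈ (lowerNFA n hn).accepts) :
    (q'.val = q.val ∧ p'.val = (lf n hn p).val ∧ r'.val = q.val) ∨
    (p'.val = p.val ∧ q'.val = q.val ∧ r.val = q.val ∧ 3 ≤ p.val) ∨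
    (p.val = p'.val ∧ q.val = q'.val ∧ r.val = r'.val) ∨
    (r'.val = q.val ∧ p.val = (mf n hn p').val ∧ q'.val = r.val) ∨
    (r'.val = q.val ∧ p.val = (mf n hn p').val ∧ r.val = q.val) ∨
    (p.val < 3 ∧ q'.val = r.val ∧ p'.val = (lf n hn p).val ∧ r'.val = q.val) ∨
    (p.val < 3 ∧ q'.val = r.val ∧ p'.val = p.val ∧ r'.val = r.val) := by
  rw [accepts4] at h
  obtain ⟨s0, s1, s2, s3, s4, h0, h1, h2, h3, h4, h5, h6⟩ := h
  rw [mem_stepA] at h1 h3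
  rw [mem_stepB] at h2 h4
  have l1 := lf_spec (hn := hn) p
  have m2 := mf_spec (hn := hn) p'
  simp only [Fin.ext_iff] at h1 h2 h3 h4
  rcases h1 with ⟨e1, e2⟩ | ⟨e1, e2⟩ <;> rcases h2 with ⟨e3, e4⟩ | ⟨e3, e4⟩ <;>
    rcases h3 with ⟨e5, e6⟩ | ⟨e5, e6⟩ <;> rcases h4 with ⟨e7, e8⟩ | ⟨e7, e8⟩ <;>
    first
      | (exfalso; omega)
      | (exact Or.inl (by omega))
      | (exact Or.inr (Or.inl (by omega)))
      | (exact Or.inr (Or.inr (Or.inl (by omega))))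
      | (exact Or.inr (Or.inr (Or.inr (Or.inl (by omega)))))
      | (exact Or.inr (Or.inr (Or.inr (Or.inr (Or.inl (by omega))))))
      | (exact Or.inr (Or.inr (Or.inr (Or.inr (Or.inr (Or.inl (by omega)))))))
      | (exact Or.inr (Or.inr (Or.inr (Or.inr (Or.inr (Or.inr (by omega)))))))

set_option maxHeartbeats 1600000 in
theorem cross (p q r p' q' r' : Fin n)
    (hXY : [(false, p, q, r), (true, p', q', r'), (false, p, q, r), (true, p', q', r')]
      ∈ (lowerNFA n hn).accepts)
    (hYX : [(false, p', q', r'), (true, p, q, r), (false, p', q', r'), (true, p, q, r)]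
      ∈ (lowerNFA n hn).accepts) :
    p = p' ∧ q = q' ∧ r = r' := by
  have D1 := run_spec (hn := hn) p q r p' q' r' hXY
  have D2 := run_spec (hn := hn) p' q' r' p q r hYX
  have l1 := lf_spec (hn := hn) p
  have l2 := lf_spec (hn := hn) p'
  have m1 := mf_spec (hn := hn) p
  have m2 := mf_spec (hn := hn) p'
  have key : p.val = p'.val ∧ q.val = q'.val ∧ r.val = r'.val := by
    rcases D1 with A | A | A | A | A | A | A <;> rcases D2 with B | B | B | B | B | B | B <;>
      omega
  exact ⟨Fin.ext key.1, Fin.ext key.2.1, Fin.ext key.2.2⟩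

end SqrtAux

/-- The nondeterministic state complexity of `√L` attains the upper bound `n³`:
for every `n ≥ 6` there is a language of an `n`-state NFA whose square root has
nondeterministic state complexity exactly `n³`. -/
theorem sqrt_complexity_exact (n : ℕ) (hn : 6 ≤ n) :
    ∃ (α σ : Type) (_ : Fintype σ), Fintype.card σ = n ∧
      ∃ M : NFA α σ,
        (∃ (τ : Type) (_ : Fintype τ) (N : NFA α τ),
          Fintype.card τ = n ^ 3 ∧
          N.accepts = {w : List α | w ++ w ∈ M.accepts}) ∧
        (∀ (τ : Type) (_ : Fintype τ) (N : NFA α τ),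
          N.accepts = {w : List α | w ++ w ∈ M.accepts} →
          n ^ 3 ≤ Fintype.card τ) := by
  refine ⟨Bool × Fin n × Fin n × Fin n, Fin n, inferInstance, by simp, lowerNFA n hn, ?_, ?_⟩
  · refine ⟨Fin n × Fin n × Fin n, inferInstance, SqrtAux.sqrtNFA (lowerNFA n hn), ?_,
      SqrtAux.sqrt_accepts _⟩
    simp [pow_succ]; ring
  · intro τ _ N hacc
    have hmem : ∀ w : List (Bool × Fin n × Fin n × Fin n),
        w ∈ N.accepts ↔ w ++ w ∈ (lowerNFA n hn).accepts := by
      intro w; rw [hacc]; rfl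
    have hcard : Fintype.card (Fin n × Fin n × Fin n) ≤ Fintype.card τ := by
      apply SqrtAux.fooling N
        (u := fun X : Fin n × Fin n × Fin n => [(false, X.1, X.2.1, X.2.2)])
        (v := fun X : Fin n × Fin n × Fin n => [(true, X.1, X.2.1, X.2.2)])
      · rintro ⟨p, q, r⟩
        rw [hmem]
        exact SqrtAux.diag_mem (hn := hn) p q r
      · rintro ⟨p, q, r⟩ ⟨p', q', r'⟩ hXY hYX
        rw [hmem] at hXY hYX
        obtain ⟨h1, h2, h3⟩ := SqrtAux.cross (hn := hn) p q r p' q' r' hXY hYX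
        simp [h1, h2, h3]
    calc n ^ 3 = Fintype.card (Fin n × Fin n × Fin n) := by simp [pow_succ]; ring
    _ ≤ Fintype.card τ := hcard
end
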